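/- Let C be the class of all Kripke frames consisting of a nonempty finite set I and a disjoint nonempty finite set F of worlds, with accessibility relation R the reflexive relation containing I×I and I×F and no other pairs (a finite cluster I of inner worlds below a finite antichain F of final worlds). Let F₂ ∈ C be the frame in which I has exactly two elements and F has exactly one element. Suppose L is any set of modal formulas such that (i) every formula satisfied at every world of every Kripke model based on a frame in C belongs to L, and (ii) every formula in L is satisfied at every world of every Kripke model based on F₂. Then L does not have the Lyndon interpolation property; that is, it is not the case that for all formulas φ, ψ with (φ→ψ)∈L there exists a formula θ with v⁺(θ)⊆v⁺(φ)∩v⁺(ψ), v⁻(θ)⊆v⁻(φ)∩v⁻(ψ), (φ→θ)∈L, and (θ→ψ)∈L. In particular, for distinct variables p, q, the formula (p∧□(□¬p∨p)) → □(p∨q∨□¬q) belongs to L but admits no such Lyndon interpolant θ. -/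

import Mathlib

/-- Modal formulas over countably many variables. -/
inductive ModalForm : Type where
  | var : ℕ → ModalForm
  | bot : ModalForm
  | and : ModalForm → ModalForm → ModalForm
  | or : ModalForm → ModalForm → ModalForm
  | not : ModalForm → ModalForm
  | imp : ModalForm → ModalForm → ModalForm
  | box : ModalForm → ModalForm

namespace ModalForm

mutual
  /-- positively occurring variables -/
  def vpos : ModalForm → Finset ℕ
    | var p => {p}
    | bot => ∅
    | and φ ψ => vpos φ ∪ vpos ψ
    | or φ ψ => vpos φ ∪ vpos ψ
    | not φ => vneg φ
    | imp φ ψ => vneg φ ∪ vpos ψ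
    | box φ => vpos φ
  /-- negatively occurring variables -/
  def vneg : ModalForm → Finset ℕ
    | var _ => ∅
    | bot => ∅
    | and φ ψ => vneg φ ∪ vneg ψ
    | or φ ψ => vneg φ ∪ vneg ψ
    | not φ => vpos φ
    | imp φ ψ => vpos φ ∪ vneg ψ
    | box φ => vneg φ
end

/-- Modal depth: maximal nesting of `□`. -/
def depth : ModalForm → ℕ
  | var _ => 0
  | bot => 0
  | and φ ψ => max (depth φ) (depth ψ)
  | or φ ψ => max (depth φ) (depth ψ)
  | not φ => depth φ
  | imp φ ψ => max (depth φ) (depth ψ)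
  | box φ => depth φ + 1

/-- `◇φ := ¬□¬φ` -/
def dia (φ : ModalForm) : ModalForm := not (box (not φ))

/-- `⊤ := ¬⊥` -/
def top : ModalForm := not bot

end ModalForm

/-- An S4 Kripke frame: nonempty set of worlds with a reflexive transitive relation. -/
structure KFrame : Type 1 where
  W : Type
  R : W → W → Prop
  nonempty : Nonempty W
  refl : ∀ x, R x x
  trans : ∀ x y z, R x y → R y z → R x z

/-- A Kripke model: a frame with a valuation. -/
structure KModel : Type 1 extends KFrame where
  val : W → ℕ → Prop

/-- The model based on frame `F` with valuation `V`. -/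
def KFrame.toModel (F : KFrame) (V : F.W → ℕ → Prop) : KModel :=
  { toKFrame := F, val := V }

/-- Satisfaction in a Kripke model. -/
def KModel.Sat (M : KModel) : M.W → ModalForm → Prop
  | w, .var p => M.val w p
  | _, .bot => False
  | w, .and φ ψ => M.Sat w φ ∧ M.Sat w ψ
  | w, .or φ ψ => M.Sat w φ ∨ M.Sat w ψ
  | w, .not φ => ¬ M.Sat w φ
  | w, .imp φ ψ => M.Sat w φ → M.Sat w ψ
  | w, .box φ => ∀ y, M.R w y → M.Sat y φ

/-- `(M0,w0) →ₙ^{(P⁺,P⁻)} (M1,w1)`: every `(P⁺,P⁻)`-formula of depth ≤ n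
satisfied at `(M0,w0)` is satisfied at `(M1,w1)`. -/
def ModalArrow (Pp Pm : Finset ℕ) (n : ℕ) (M0 : KModel) (w0 : M0.W)
    (M1 : KModel) (w1 : M1.W) : Prop :=
  ∀ φ : ModalForm, φ.vpos ⊆ Pp → φ.vneg ⊆ Pm → φ.depth ≤ n →
    M0.Sat w0 φ → M1.Sat w1 φ

/-- p-morphism between frames. -/
def PMorphism (F G : KFrame) (f : F.W → G.W) : Prop :=
  (∀ x y, F.R x y → G.R (f x) (f y)) ∧
  (∀ x w, G.R (f x) w → ∃ z, F.R x z ∧ f z = w)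

/-- The class `C` of Kripke models enjoys `n`-IP. -/
def EnjoysIP (C : Set KModel) (n : ℕ) : Prop :=
  ∀ (Pp Pm : Finset ℕ) (M0 M1 : KModel), M0 ∈ C → M1 ∈ C →
    ∀ (w0 : M0.W) (w1 : M1.W), ModalArrow Pp Pm n M0 w0 M1 w1 →
      ∃ (F : KFrame) (wstar : F.W) (f0 : F.W → M0.W) (f1 : F.W → M1.W),
        (∀ V : F.W → ℕ → Prop, F.toModel V ∈ C) ∧
        PMorphism F M0.toKFrame f0 ∧
        PMorphism F M1.toKFrame f1 ∧
        f0 wstar = w0 ∧ f1 wstar = w1 ∧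
        ∀ x : F.W, ModalArrow Pp Pm 0 M0 (f0 x) M1 (f1 x)

/-- A world is final iff every successor is also a predecessor. -/
def KModel.Final (M : KModel) (w : M.W) : Prop := ∀ y, M.R w y → M.R y w

/-- The cluster of a world. -/
def KModel.cluster (M : KModel) (w : M.W) : Set M.W := {u | M.R w u ∧ M.R u w}

/-- Cluster `C0` of `M0` matches cluster `C1` of `M1`. -/
def Matches (Pp Pm : Finset ℕ) (M0 M1 : KModel) (C0 : Set M0.W) (C1 : Set M1.W) : Prop :=
  (∀ u0 ∈ C0, ∃ u1 ∈ C1, ModalArrow Pp Pm 0 M0 u0 M1 u1) ∧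
  (∀ u1 ∈ C1, ∃ u0 ∈ C0, ModalArrow Pp Pm 0 M0 u0 M1 u1)

/-- `φ` is satisfied at every world of every model in `C`. -/
def ValidOn (C : Set KModel) (φ : ModalForm) : Prop :=
  ∀ M ∈ C, ∀ w : M.W, M.Sat w φ

/-- The class of Γ(LP₂,1,ω) frames: a finite cluster `I` of inner worlds below
a finite antichain `F` of final worlds. -/
def CFail : Set KFrame :=
  {Fr | Finite Fr.W ∧ ∃ I F : Set Fr.W, I.Nonempty ∧ F.Nonempty ∧ Disjoint I F ∧
    (∀ w : Fr.W, w ∈ I ∨ w ∈ F) ∧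
    ∀ u v : Fr.W, Fr.R u v ↔ (u = v ∨ (u ∈ I ∧ v ∈ I) ∨ (u ∈ I ∧ v ∈ F))}

/-- The frame of Γ(LS,1,2): the member of `CFail` with a two-element `I = {0,1}`
and a one-element `F = {2}`. -/
def LS12Frame : KFrame where
  W := Fin 3
  R := fun a b => a = b ∨ a.val ≤ 1
  nonempty := ⟨0⟩
  refl := fun _ => Or.inl rfl
  trans := fun x y z hxy hyz => by
    rcases hxy with rfl | h
    · exact hyz
    · exact Or.inr h

/-- `p ∧ □(□¬p ∨ p)` -/
def PhiF (p : ℕ) : ModalForm :=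
  ModalForm.and (ModalForm.var p)
    (ModalForm.box (ModalForm.or (ModalForm.box (ModalForm.not (ModalForm.var p))) (ModalForm.var p)))

/-- `□(p ∨ q ∨ □¬q)` -/
def PsiF (p q : ℕ) : ModalForm :=
  ModalForm.box (ModalForm.or (ModalForm.var p)
    (ModalForm.or (ModalForm.var q) (ModalForm.box (ModalForm.not (ModalForm.var q)))))

/-!
A Lyndon interpolant `θ` of `PhiF p → PsiF p q` may only contain `p`, and only positively. On
`LS12Frame`, `PhiF p` holds at `0` when `p` is true exactly at the inner worlds `0, 1`, and
`PsiF p q` fails at `0` when `p` is true only at `0` and `q` only at the final world `2`. The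
relation `x = 2 ∨ y = 0` between the two models is a directed simulation for positive occurrences
of `p`, so it carries `θ` from the first model to the second and `θ → PsiF p q` fails there.
-/

namespace KModel

structure DirectedSimulation (Pp Pm : Finset ℕ) (M N : KModel) (Z : M.W → N.W → Prop) : Prop where
  forth : ∀ {x y x'}, Z x y → M.R x x' → ∃ y', N.R y y' ∧ Z x' y'
  back : ∀ {x y y'}, Z x y → N.R y y' → ∃ x', M.R x x' ∧ Z x' y'
  val_pos : ∀ {x y}, Z x y → ∀ r ∈ Pp, M.val x r → N.val y r
  val_neg : ∀ {x y}, Z x y → ∀ r ∈ Pm, N.val y r → M.val x r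

namespace DirectedSimulation

variable {Pp Pm : Finset ℕ} {M N : KModel} {Z : M.W → N.W → Prop}

theorem symm (hZ : DirectedSimulation Pp Pm M N Z) :
    DirectedSimulation Pm Pp N M (flip Z) where
  forth := hZ.back
  back := hZ.forth
  val_pos := hZ.val_neg
  val_neg := hZ.val_pos

theorem sat_of_sat (θ : ModalForm) (hZ : DirectedSimulation Pp Pm M N Z) {x : M.W} {y : N.W}
    (hxy : Z x y) (hpos : θ.vpos ⊆ Pp) (hneg : θ.vneg ⊆ Pm) (hx : M.Sat x θ) : N.Sat y θ := by
  induction θ generalizing Pp Pm M N with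
  | var r => exact hZ.val_pos hxy r (hpos (Finset.mem_singleton_self r)) hx
  | bot => exact hx
  | and φ ψ ihφ ihψ =>
    simp only [ModalForm.vpos, ModalForm.vneg, Finset.union_subset_iff] at hpos hneg
    exact ⟨ihφ hZ hxy hpos.1 hneg.1 hx.1, ihψ hZ hxy hpos.2 hneg.2 hx.2⟩
  | or φ ψ ihφ ihψ =>
    simp only [ModalForm.vpos, ModalForm.vneg, Finset.union_subset_iff] at hpos hneg
    exact hx.imp (ihφ hZ hxy hpos.1 hneg.1) (ihψ hZ hxy hpos.2 hneg.2)
  | not φ ihφ =>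
    simp only [ModalForm.vpos, ModalForm.vneg] at hpos hneg
    exact fun hy => hx (ihφ hZ.symm hxy hneg hpos hy)
  | imp φ ψ ihφ ihψ =>
    simp only [ModalForm.vpos, ModalForm.vneg, Finset.union_subset_iff] at hpos hneg
    exact fun hy => ihψ hZ hxy hpos.2 hneg.2 (hx (ihφ hZ.symm hxy hneg.1 hpos.1 hy))
  | box φ ihφ =>
    intro y' hyy'
    obtain ⟨x', hxx', hxy'⟩ := hZ.back hxy hyy'
    exact ihφ hZ hxy' hpos hneg (hx x' hxx')

end DirectedSimulation

end KModel

open ModalForm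

theorem vpos_phiF_inter_vpos_psiF (p q : ℕ) : (PhiF p).vpos ∩ (PsiF p q).vpos = {p} := by
  ext r
  simp only [PhiF, PsiF, vpos, vneg, Finset.mem_inter, Finset.mem_union, Finset.mem_singleton]
  tauto

theorem vneg_phiF_inter_vneg_psiF {p q : ℕ} (hpq : p ≠ q) :
    (PhiF p).vneg ∩ (PsiF p q).vneg = ∅ := by
  simp [PhiF, PsiF, vpos, vneg, hpq]

theorem CFail.sat_phiF_imp_psiF {Fr : KFrame} (hFr : Fr ∈ CFail) (p q : ℕ)
    (V : Fr.W → ℕ → Prop) (w : Fr.W) : (Fr.toModel V).Sat w ((PhiF p).imp (PsiF p q)) := by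
  obtain ⟨-, I, F, -, -, hIF, hcover, hR⟩ := hFr
  rintro ⟨hwp, hbox⟩ y hwy
  rcases hcover y with hyI | hyF
  · -- an inner successor `y` sees `w`, where `p` holds, so `□¬p` fails at `y`
    have hyw : Fr.R y w := by
      rcases (hR w y).1 hwy with rfl | ⟨hwI, -⟩ | ⟨hwI, -⟩
      · exact Fr.refl w
      all_goals exact (hR y w).2 (Or.inr (Or.inl ⟨hyI, hwI⟩))
    exact Or.inl ((hbox y hwy).resolve_left fun hnp => hnp w hyw hwp)
  · have hy_only : ∀ z, Fr.R y z → z = y := fun z hyz => by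
      rcases (hR y z).1 hyz with rfl | ⟨hyI, -⟩ | ⟨hyI, -⟩
      · rfl
      all_goals exact absurd hyI (Set.disjoint_right.1 hIF hyF)
    by_cases hq : V y q
    · exact Or.inr (Or.inl hq)
    · exact Or.inr (Or.inr fun z hyz hqz => hq (hy_only z hyz ▸ hqz))

namespace LS12Frame

def innerVal (p : ℕ) : Fin 3 → ℕ → Prop := fun w r => r = p ∧ w ≠ 2

def splitVal (p q : ℕ) : Fin 3 → ℕ → Prop := fun w r => (r = p ∧ w = 0) ∨ (r = q ∧ w = 2)

theorem sat_phiF (p : ℕ) : (LS12Frame.toModel (innerVal p)).Sat (0 : Fin 3) (PhiF p) := by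
  refine ⟨⟨rfl, by decide⟩, fun (y : Fin 3) _ => ?_⟩
  by_cases hy : y = 2
  · subst hy
    refine Or.inl fun z h2z hpz => hpz.2 ?_
    rcases h2z with rfl | h
    · rfl
    · exact absurd h (by decide)
  · exact Or.inr ⟨rfl, hy⟩

theorem not_sat_psiF {p q : ℕ} (hpq : p ≠ q) :
    ¬ (LS12Frame.toModel (splitVal p q)).Sat (0 : Fin 3) (PsiF p q) := by
  intro h
  rcases h (1 : Fin 3) (Or.inr (by decide)) with hp | hq | hnq
  · rcases hp with ⟨-, h⟩ | ⟨h, -⟩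
    exacts [absurd h (by decide), hpq h]
  · rcases hq with ⟨h, -⟩ | ⟨-, h⟩
    exacts [hpq h.symm, absurd h (by decide)]
  · exact hnq (2 : Fin 3) (Or.inr (by decide)) (Or.inr ⟨rfl, rfl⟩)

theorem directedSimulation_innerVal_splitVal (p q : ℕ) :
    (LS12Frame.toModel (innerVal p)).DirectedSimulation {p} ∅ (LS12Frame.toModel (splitVal p q))
      (fun (x y : Fin 3) => x = 2 ∨ y = 0) where
  forth := by
    show ∀ {x y x' : Fin 3}, (x = 2 ∨ y = 0) → (x = x' ∨ x.val ≤ 1) →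
      ∃ y' : Fin 3, (y = y' ∨ y.val ≤ 1) ∧ (x' = 2 ∨ y' = 0)
    decide
  back := by
    show ∀ {x y y' : Fin 3}, (x = 2 ∨ y = 0) → (y = y' ∨ y.val ≤ 1) →
      ∃ x' : Fin 3, (x = x' ∨ x.val ≤ 1) ∧ (x' = 2 ∨ y' = 0)
    decide
  val_pos := by
    rintro x y (hx | rfl) r hr ⟨rfl, hx2⟩
    · exact absurd hx hx2
    · exact Or.inl ⟨rfl, rfl⟩
  val_neg := by simp

end LS12Frame

theorem stmt19 (p q : ℕ) (hpq : p ≠ q) (L : Set ModalForm)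
    (hsound : ∀ φ : ModalForm,
      (∀ Fr ∈ CFail, ∀ (V : Fr.W → ℕ → Prop) (w : Fr.W), (Fr.toModel V).Sat w φ) → φ ∈ L)
    (hcomplete : ∀ φ ∈ L, ∀ (V : LS12Frame.W → ℕ → Prop) (w : LS12Frame.W),
      (LS12Frame.toModel V).Sat w φ) :
    (¬ ∀ φ ψ : ModalForm, (φ.imp ψ) ∈ L →
        ∃ θ : ModalForm, θ.vpos ⊆ φ.vpos ∩ ψ.vpos ∧ θ.vneg ⊆ φ.vneg ∩ ψ.vneg ∧
          (φ.imp θ) ∈ L ∧ (θ.imp ψ) ∈ L) ∧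
    ((PhiF p).imp (PsiF p q)) ∈ L ∧
    ¬ ∃ θ : ModalForm,
        θ.vpos ⊆ (PhiF p).vpos ∩ (PsiF p q).vpos ∧
        θ.vneg ⊆ (PhiF p).vneg ∩ (PsiF p q).vneg ∧
        ((PhiF p).imp θ) ∈ L ∧ (θ.imp (PsiF p q)) ∈ L := by
  have hmem : (PhiF p).imp (PsiF p q) ∈ L :=
    hsound _ fun _ hFr V w => CFail.sat_phiF_imp_psiF hFr p q V w
  have hno : ¬ ∃ θ : ModalForm,
      θ.vpos ⊆ (PhiF p).vpos ∩ (PsiF p q).vpos ∧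
      θ.vneg ⊆ (PhiF p).vneg ∩ (PsiF p q).vneg ∧
      ((PhiF p).imp θ) ∈ L ∧ (θ.imp (PsiF p q)) ∈ L := by
    rintro ⟨θ, hpos, hneg, hφθ, hθψ⟩
    rw [vpos_phiF_inter_vpos_psiF] at hpos
    rw [vneg_phiF_inter_vneg_psiF hpq] at hneg
    have hθ := (LS12Frame.directedSimulation_innerVal_splitVal p q).sat_of_sat θ (Or.inr rfl)
      hpos hneg (hcomplete _ hφθ _ (0 : Fin 3) (LS12Frame.sat_phiF p))
    exact LS12Frame.not_sat_psiF hpq (hcomplete _ hθψ _ (0 : Fin 3) hθ)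
  exact ⟨fun hIP => hno (hIP _ _ hmem), hmem, hno⟩
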